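/- Let γ > 0 and let (M_j)_{j∈N} be a sequence in Ŵ ∩ S with λ_1(M_0) > 0 together with unit vectors v_j ∈ R^d such that M_j v_j = λ_1(M_j) v_j and M_{j+1} = P_Ŵ(M_j + γ·v_j ⊗ v_j) / ‖P_Ŵ(M_j + γ·v_j ⊗ v_j)‖_F for all j. Then the sequence (λ_1(M_j))_{j∈N} converges to a limit λ_∞ ∈ [0,1], and ‖M_{j+1} − M_j‖_F → 0 as j → ∞. -/

import Mathlib

open Matrix

noncomputable def vnorm {d : ℕ} (v : Fin d → ℝ) : ℝ := Real.sqrt (∑ i, v i ^ 2)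

noncomputable def frobInner {d : ℕ} (M N : Matrix (Fin d) (Fin d) ℝ) : ℝ :=
  ∑ i, ∑ j, M i j * N i j

noncomputable def frobNorm {d : ℕ} (M : Matrix (Fin d) (Fin d) ℝ) : ℝ :=
  Real.sqrt (frobInner M M)

def IsOrthProjOn {d : ℕ} (V : Submodule ℝ (Matrix (Fin d) (Fin d) ℝ))
    (P : Matrix (Fin d) (Fin d) ℝ →ₗ[ℝ] Matrix (Fin d) (Fin d) ℝ) : Prop :=
  (∀ X, P X ∈ V) ∧ (∀ X ∈ V, P X = X) ∧ ∀ X Y, frobInner (P X) Y = frobInner X (P Y)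

noncomputable def hsNorm {d : ℕ}
    (T : Matrix (Fin d) (Fin d) ℝ →ₗ[ℝ] Matrix (Fin d) (Fin d) ℝ) : ℝ :=
  Real.sqrt (∑ i, ∑ j,
    frobInner (T (Matrix.single i j 1)) (T (Matrix.single i j 1)))

noncomputable def specNorm {d : ℕ} (M : Matrix (Fin d) (Fin d) ℝ) : ℝ :=
  sSup {r : ℝ | ∃ v : Fin d → ℝ, (∑ i, v i ^ 2) = 1 ∧ r = |dotProduct v (M.mulVec v)|}

noncomputable def lamTop {d : ℕ} (M : Matrix (Fin d) (Fin d) ℝ) : ℝ :=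
  sSup {r : ℝ | ∃ v : Fin d → ℝ, (∑ i, v i ^ 2) = 1 ∧ r = dotProduct v (M.mulVec v)}

def IsLocMaxSpec {d : ℕ} (V : Submodule ℝ (Matrix (Fin d) (Fin d) ℝ))
    (M : Matrix (Fin d) (Fin d) ℝ) : Prop :=
  M ∈ V ∧ frobNorm M ≤ 1 ∧
    ∃ ε > 0, ∀ X ∈ V, frobNorm X ≤ 1 → frobNorm (X - M) < ε → specNorm X ≤ specNorm M

/-!
For one step of the iteration write `N = P (M + γ • v vᵀ)` and `M' = N / ‖N‖`, where `‖M‖ = 1`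
and `v` is a unit eigenvector of `M` for `λ = λ₁(M)`. As `P` is an orthogonal projection fixing
`M`, Cauchy–Schwarz gives
`1 + γ λ = ⟨N, M⟩ ≤ ‖N‖ = ⟨M', M + γ • v vᵀ⟩ ≤ ⟨M', M⟩ + γ λ₁(M')`,
and since `‖M' - M‖² = 2 - 2 ⟨M', M⟩` this says `‖M' - M‖² ≤ 2γ (λ₁(M') - λ)`. So the top
eigenvalues increase; they are bounded by the Frobenius norm `1`, hence converge, and the
increments vanish.
-/

open Filter Topology

section Frobenius

variable {d : ℕ}

def frobVec : Matrix (Fin d) (Fin d) ℝ →ₗ[ℝ] EuclideanSpace ℝ (Fin d × Fin d) where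
  toFun A := WithLp.toLp 2 fun p => A p.1 p.2
  map_add' _ _ := rfl
  map_smul' _ _ := rfl

theorem frobInner_eq_inner (A B : Matrix (Fin d) (Fin d) ℝ) :
    frobInner A B = inner ℝ (frobVec A) (frobVec B) := by
  simp only [frobInner, PiLp.inner_apply, Fintype.sum_prod_type, RCLike.inner_apply, conj_trivial]
  exact Finset.sum_congr rfl fun i _ => Finset.sum_congr rfl fun j _ => mul_comm _ _

theorem frobNorm_eq_norm (A : Matrix (Fin d) (Fin d) ℝ) : frobNorm A = ‖frobVec A‖ := by
  rw [frobNorm, frobInner_eq_inner, real_inner_self_eq_norm_sq, Real.sqrt_sq (norm_nonneg _)]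

theorem frobInner_comm (A B : Matrix (Fin d) (Fin d) ℝ) : frobInner A B = frobInner B A := by
  simp only [frobInner_eq_inner, real_inner_comm]

theorem frobInner_add_left (A B C : Matrix (Fin d) (Fin d) ℝ) :
    frobInner (A + B) C = frobInner A C + frobInner B C := by
  simp only [frobInner_eq_inner, map_add, inner_add_left]

theorem frobInner_add_right (A B C : Matrix (Fin d) (Fin d) ℝ) :
    frobInner A (B + C) = frobInner A B + frobInner A C := by
  simp only [frobInner_eq_inner, map_add, inner_add_right]

theorem frobInner_smul_left (c : ℝ) (A B : Matrix (Fin d) (Fin d) ℝ) :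
    frobInner (c • A) B = c * frobInner A B := by
  simp only [frobInner_eq_inner, map_smul, real_inner_smul_left]

theorem frobInner_smul_right (c : ℝ) (A B : Matrix (Fin d) (Fin d) ℝ) :
    frobInner A (c • B) = c * frobInner A B := by
  simp only [frobInner_eq_inner, map_smul, real_inner_smul_right]

theorem frobInner_self (A : Matrix (Fin d) (Fin d) ℝ) : frobInner A A = frobNorm A ^ 2 := by
  rw [frobInner_eq_inner, frobNorm_eq_norm, real_inner_self_eq_norm_sq]

theorem frobInner_le_frobNorm_mul_frobNorm (A B : Matrix (Fin d) (Fin d) ℝ) :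
    frobInner A B ≤ frobNorm A * frobNorm B := by
  simpa only [frobInner_eq_inner, frobNorm_eq_norm] using real_inner_le_norm _ _

theorem frobNorm_sub_sq (A B : Matrix (Fin d) (Fin d) ℝ) :
    frobNorm (A - B) ^ 2 = frobNorm A ^ 2 - 2 * frobInner A B + frobNorm B ^ 2 := by
  simpa only [frobInner_eq_inner, frobNorm_eq_norm, map_sub] using norm_sub_sq_real _ _

theorem dotProduct_mulVec_eq_frobInner (w : Fin d → ℝ) (A : Matrix (Fin d) (Fin d) ℝ) :
    w ⬝ᵥ A *ᵥ w = frobInner (vecMulVec w w) A := by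
  simp only [frobInner, dotProduct, mulVec, vecMulVec_apply, Finset.mul_sum]
  exact Finset.sum_congr rfl fun i _ => Finset.sum_congr rfl fun j _ => by ring

theorem frobNorm_vecMulVec_self (w : Fin d → ℝ) : frobNorm (vecMulVec w w) = ∑ i, w i ^ 2 := by
  have hsq : frobInner (vecMulVec w w) (vecMulVec w w) = (∑ i, w i ^ 2) ^ 2 := by
    simp only [frobInner, vecMulVec_apply, sq, Finset.sum_mul_sum]
    exact Finset.sum_congr rfl fun i _ => Finset.sum_congr rfl fun j _ => by ring
  rw [frobNorm, hsq, Real.sqrt_sq (Finset.sum_nonneg fun i _ => sq_nonneg _)]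

end Frobenius

section TopEigenvalue

variable {d : ℕ}

theorem dotProduct_mulVec_le_frobNorm (A : Matrix (Fin d) (Fin d) ℝ) {w : Fin d → ℝ}
    (hw : ∑ i, w i ^ 2 = 1) : w ⬝ᵥ A *ᵥ w ≤ frobNorm A := by
  simpa only [← dotProduct_mulVec_eq_frobInner, frobNorm_vecMulVec_self, hw, one_mul] using
    frobInner_le_frobNorm_mul_frobNorm (vecMulVec w w) A

theorem le_lamTop (A : Matrix (Fin d) (Fin d) ℝ) {w : Fin d → ℝ} (hw : ∑ i, w i ^ 2 = 1) :
    w ⬝ᵥ A *ᵥ w ≤ lamTop A :=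
  le_csSup ⟨frobNorm A, by rintro r ⟨u, hu, rfl⟩; exact dotProduct_mulVec_le_frobNorm A hu⟩
    ⟨w, hw, rfl⟩

theorem lamTop_le_frobNorm (A : Matrix (Fin d) (Fin d) ℝ) {w : Fin d → ℝ}
    (hw : ∑ i, w i ^ 2 = 1) : lamTop A ≤ frobNorm A :=
  csSup_le ⟨_, w, hw, rfl⟩ fun _ ⟨_, hu, hr⟩ => hr ▸ dotProduct_mulVec_le_frobNorm A hu

theorem dotProduct_mulVec_of_mulVec_eq_smul {A : Matrix (Fin d) (Fin d) ℝ} {w : Fin d → ℝ}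
    {μ : ℝ} (hw : ∑ i, w i ^ 2 = 1) (h : A *ᵥ w = μ • w) : w ⬝ᵥ A *ᵥ w = μ := by
  have hww : w ⬝ᵥ w = 1 := by simpa only [dotProduct, sq] using hw
  rw [h, dotProduct_smul, smul_eq_mul, hww, mul_one]

end TopEigenvalue

theorem tendsto_zero_of_sq_le_mul_succ_sub {a e : ℕ → ℝ} {K L : ℝ}
    (ha : Tendsto a atTop (𝓝 L)) (he0 : ∀ j, 0 ≤ e j)
    (he : ∀ j, e j ^ 2 ≤ K * (a (j + 1) - a j)) : Tendsto e atTop (𝓝 0) := by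
  have hincr : Tendsto (fun j => √(K * (a (j + 1) - a j))) atTop (𝓝 0) := by
    simpa using (((ha.comp (tendsto_add_atTop_nat 1)).sub ha).const_mul K).sqrt
  exact squeeze_zero he0 (fun j => Real.le_sqrt_of_sq_le (he j)) hincr

section Ascent

variable {d : ℕ} {V : Submodule ℝ (Matrix (Fin d) (Fin d) ℝ)}
  {P : Matrix (Fin d) (Fin d) ℝ →ₗ[ℝ] Matrix (Fin d) (Fin d) ℝ}

theorem IsOrthProjOn.frobInner_apply_of_mem (hP : IsOrthProjOn V P)
    (X : Matrix (Fin d) (Fin d) ℝ) {Y : Matrix (Fin d) (Fin d) ℝ} (hY : Y ∈ V) :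
    frobInner (P X) Y = frobInner X Y := by
  rw [hP.2.2, hP.2.1 Y hY]

theorem IsOrthProjOn.frobInner_apply_self (hP : IsOrthProjOn V P)
    (X : Matrix (Fin d) (Fin d) ℝ) : frobInner (P X) X = frobNorm (P X) ^ 2 := by
  rw [← frobInner_self, frobInner_comm, hP.frobInner_apply_of_mem X (hP.1 X), frobInner_comm]

theorem IsOrthProjOn.one_add_frobInner_le (hP : IsOrthProjOn V P)
    {M M' U : Matrix (Fin d) (Fin d) ℝ} {γ : ℝ} (hM : M ∈ V) (hM1 : frobNorm M = 1)
    (hM' : M' = (frobNorm (P (M + γ • U)))⁻¹ • P (M + γ • U)) :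
    1 + γ * frobInner U M ≤ frobInner M' M + γ * frobInner M' U := by
  set N := P (M + γ • U)
  have hNM : 1 + γ * frobInner U M = frobInner N M := by
    rw [hP.frobInner_apply_of_mem _ hM, frobInner_add_left, frobInner_smul_left, frobInner_self,
      hM1, one_pow]
  have hM'X : frobInner M' M + γ * frobInner M' U = frobNorm N := by
    rw [← frobInner_smul_right, ← frobInner_add_right, hM', frobInner_smul_left,
      hP.frobInner_apply_self, sq, ← mul_assoc, inv_mul_mul_self]
  calc 1 + γ * frobInner U M = frobInner N M := hNM
    _ ≤ frobNorm N * frobNorm M := frobInner_le_frobNorm_mul_frobNorm N M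
    _ = frobInner M' M + γ * frobInner M' U := by rw [hM1, mul_one, hM'X]

theorem IsOrthProjOn.frobNorm_sub_sq_le (hP : IsOrthProjOn V P)
    {M M' : Matrix (Fin d) (Fin d) ℝ} {w : Fin d → ℝ} {γ : ℝ} (hγ : 0 ≤ γ) (hM : M ∈ V)
    (hM1 : frobNorm M = 1) (hM'1 : frobNorm M' = 1) (hw : ∑ i, w i ^ 2 = 1)
    (heig : M *ᵥ w = lamTop M • w)
    (hM' : M' = (frobNorm (P (M + γ • vecMulVec w w)))⁻¹ • P (M + γ • vecMulVec w w)) :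
    frobNorm (M' - M) ^ 2 ≤ 2 * γ * (lamTop M' - lamTop M) := by
  have hascent := hP.one_add_frobInner_le hM hM1 hM'
  rw [← dotProduct_mulVec_eq_frobInner, dotProduct_mulVec_of_mulVec_eq_smul hw heig,
    frobInner_comm M' (vecMulVec w w), ← dotProduct_mulVec_eq_frobInner] at hascent
  have hM'top := mul_le_mul_of_nonneg_left (le_lamTop M' hw) hγ
  rw [frobNorm_sub_sq, hM1, hM'1]
  linarith

end Ascent

theorem iteration_convergence_general
    (d : ℕ) (γ : ℝ) (hγ : 0 < γ)
    (Wh : Submodule ℝ (Matrix (Fin d) (Fin d) ℝ))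
    (PWh : Matrix (Fin d) (Fin d) ℝ →ₗ[ℝ] Matrix (Fin d) (Fin d) ℝ)
    (hPWh : IsOrthProjOn Wh PWh)
    (M : ℕ → Matrix (Fin d) (Fin d) ℝ) (v : ℕ → Fin d → ℝ)
    (hmem : ∀ j, M j ∈ Wh) (hS : ∀ j, frobNorm (M j) = 1)
    (h0 : 0 < lamTop (M 0))
    (hv : ∀ j, ∑ i, v j i ^ 2 = 1)
    (heig : ∀ j, (M j).mulVec (v j) = lamTop (M j) • v j)
    (hiter : ∀ j, M (j + 1) =
      (frobNorm (PWh (M j + γ • vecMulVec (v j) (v j))))⁻¹ •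
        PWh (M j + γ • vecMulVec (v j) (v j))) :
    (∃ L ∈ Set.Icc (0 : ℝ) 1,
        Filter.Tendsto (fun j => lamTop (M j)) Filter.atTop (nhds L)) ∧
      Filter.Tendsto (fun j => frobNorm (M (j + 1) - M j)) Filter.atTop (nhds 0) := by
  have hstep j : frobNorm (M (j + 1) - M j) ^ 2 ≤ 2 * γ * (lamTop (M (j + 1)) - lamTop (M j)) :=
    hPWh.frobNorm_sub_sq_le hγ.le (hmem j) (hS j) (hS (j + 1)) (hv j) (heig j) (hiter j)
  have hle_one j : lamTop (M j) ≤ 1 := (lamTop_le_frobNorm (M j) (hv j)).trans_eq (hS j)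
  have hmono : Monotone fun j => lamTop (M j) := monotone_nat_of_le_succ fun j =>
    sub_nonneg.1 <| nonneg_of_mul_nonneg_right ((sq_nonneg _).trans (hstep j)) (by positivity)
  have hbdd : BddAbove (Set.range fun j => lamTop (M j)) := ⟨1, Set.forall_mem_range.2 hle_one⟩
  have hlim := tendsto_atTop_ciSup hmono hbdd
  refine ⟨⟨_, ⟨h0.le.trans (le_ciSup hbdd 0), ciSup_le hle_one⟩, hlim⟩, ?_⟩
  exact tendsto_zero_of_sq_le_mul_succ_sub hlim (fun j => Real.sqrt_nonneg _) hstep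

/-- convergence of the eigenvalues and vanishing increments of the projected
gradient ascent iteration. -/
theorem iteration_convergence
    (d : ℕ) (γ : ℝ) (hγ : 0 < γ)
    (Wh : Submodule ℝ (Matrix (Fin d) (Fin d) ℝ))
    (hWhsym : ∀ X ∈ Wh, X.IsSymm)
    (PWh : Matrix (Fin d) (Fin d) ℝ →ₗ[ℝ] Matrix (Fin d) (Fin d) ℝ)
    (hPWh : IsOrthProjOn Wh PWh)
    (M : ℕ → Matrix (Fin d) (Fin d) ℝ) (v : ℕ → Fin d → ℝ)
    (hmem : ∀ j, M j ∈ Wh) (hS : ∀ j, frobNorm (M j) = 1)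
    (h0 : 0 < lamTop (M 0))
    (hv : ∀ j, ∑ i, v j i ^ 2 = 1)
    (heig : ∀ j, (M j).mulVec (v j) = lamTop (M j) • v j)
    (hiter : ∀ j, M (j + 1) =
      (frobNorm (PWh (M j + γ • vecMulVec (v j) (v j))))⁻¹ •
        PWh (M j + γ • vecMulVec (v j) (v j))) :
    (∃ L ∈ Set.Icc (0 : ℝ) 1,
        Filter.Tendsto (fun j => lamTop (M j)) Filter.atTop (nhds L)) ∧
      Filter.Tendsto (fun j => frobNorm (M (j + 1) - M j)) Filter.atTop (nhds 0) :=
  iteration_convergence_general d γ hγ Wh PWh hPWh M v hmem hS h0 hv heig hiter
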